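/- Let 0 < v₁ < v₂. Then (2/(v₂ − v₁)^{3/2}) · ∫_ℝ ∫_ℝ max(z, 0) · max(x/√v₁ − z/√(v₂ − v₁), 0) · φ(z) φ(x) dz dx = (1/(π (v₂ − v₁)²)) · ( √((v₂ − v₁)/v₁) − arctan(√((v₂ − v₁)/v₁)) ). (This identifies Groeneboom's expectation formula for the joint density of the vertex times of the concave majorant of Brownian motion straddling a fixed time with its explicit closed form.) -/

import Mathlib

open Real Set MeasureTheory

/-!
Put `a = √v₁`, `b = √(v₂ - v₁)`, `γ = b / a` and `G c = ∫₀ᶜ e^{-s²/2} ds`. After factoring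
`1 / b` out of `max (x/a - z/b) 0`, the inner integral in `z` is elementary: with `c = γ x`,
`(z - c) e^{-z²/2} - G z` is an antiderivative of `z (c - z) e^{-z²/2}`, so the inner integral
is `γ x - G (γ x)` for `x > 0` and vanishes for `x ≤ 0`. For the outer integral, the
substitution `s = x t` gives `G (γ x) e^{-x²/2} = ∫₀^γ x e^{-(1 + t²) x² / 2} dt`; exchanging
the order of integration, the Gaussian moment in `x` is `1 / (1 + t²)`, whose integral over
`[0, γ]` is `arctan γ`.
-/

noncomputable def gaussPrimitive (c : ℝ) : ℝ := ∫ s in (0:ℝ)..c, exp (-s ^ 2 / 2)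

theorem hasDerivAt_gaussPrimitive (c : ℝ) : HasDerivAt gaussPrimitive (exp (-c ^ 2 / 2)) c :=
  (Continuous.integral_hasStrictDerivAt (by fun_prop) 0 c).hasDerivAt

theorem hasDerivAt_exp_neg_sq_div_two (z : ℝ) :
    HasDerivAt (fun z : ℝ => exp (-z ^ 2 / 2)) (-z * exp (-z ^ 2 / 2)) z := by
  have h : HasDerivAt (fun z : ℝ => -z ^ 2 / 2) (-z) z :=
    ((hasDerivAt_pow 2 z).neg.div_const 2).congr_deriv (by ring)
  exact h.exp.congr_deriv (by ring)

theorem integral_Ioi_mul_exp_neg_mul_sq {b : ℝ} (hb : 0 < b) :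
    ∫ x in Ioi (0:ℝ), x * exp (-b * x ^ 2) = (2 * b)⁻¹ := by
  have h := integral_mul_cexp_neg_mul_sq (b := (b : ℂ)) (by simpa using hb)
  exact_mod_cast (show ((∫ x in Ioi (0:ℝ), x * exp (-b * x ^ 2) : ℝ) : ℂ) = ((2 * b)⁻¹ : ℝ) by
    rw [← integral_complex_ofReal]; push_cast; exact h)

theorem integral_max_mul_max_sub_mul_exp {c : ℝ} (hc : 0 ≤ c) :
    ∫ z, max z 0 * max (c - z) 0 * exp (-z ^ 2 / 2) = c - gaussPrimitive c := by
  have hsupp : (fun z => max z 0 * max (c - z) 0 * exp (-z ^ 2 / 2))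
      = (Ioc 0 c).indicator fun z => z * (c - z) * exp (-z ^ 2 / 2) := by
    ext z
    by_cases hz : z ∈ Ioc 0 c
    · rw [indicator_of_mem hz, max_eq_left hz.1.le, max_eq_left (sub_nonneg.2 hz.2)]
    · rw [indicator_of_notMem hz]
      rw [mem_Ioc, not_and, not_le] at hz
      rcases le_or_gt z 0 with h | h
      · rw [max_eq_right h]; ring
      · rw [max_eq_right (show c - z ≤ 0 by linarith [hz h])]; ring
  have hderiv : ∀ z ∈ uIcc 0 c, HasDerivAt (fun z => (z - c) * exp (-z ^ 2 / 2) - gaussPrimitive z)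
      (z * (c - z) * exp (-z ^ 2 / 2)) z := fun z _ =>
    ((((hasDerivAt_id z).sub_const c).mul (hasDerivAt_exp_neg_sq_div_two z)).sub
      (hasDerivAt_gaussPrimitive z)).congr_deriv (by simp only [id]; ring)
  rw [hsupp, integral_indicator measurableSet_Ioc, ← intervalIntegral.integral_of_le hc,
    intervalIntegral.integral_eq_sub_of_hasDerivAt hderiv
      (by apply Continuous.intervalIntegrable; fun_prop)]
  simp [gaussPrimitive, neg_add_eq_sub]

theorem gaussPrimitive_mul_mul_exp_eq_integral (γ x : ℝ) :
    gaussPrimitive (γ * x) * exp (-x ^ 2 / 2)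
      = ∫ t in (0:ℝ)..γ, x * exp (-((1 + t ^ 2) / 2) * x ^ 2) := by
  have hsubst := intervalIntegral.mul_integral_comp_mul_left (a := 0) (b := γ) (c := x)
    (f := fun s => exp (-s ^ 2 / 2))
  rw [mul_zero] at hsubst
  rw [gaussPrimitive, mul_comm γ, ← hsubst, mul_assoc, ← intervalIntegral.integral_mul_const,
    ← intervalIntegral.integral_const_mul]
  congr 1 with t
  rw [← exp_add]
  ring_nf

theorem integrable_mul_exp_neg_one_add_sq_mul_sq (γ : ℝ) :
    Integrable (Function.uncurry fun x t : ℝ => x * exp (-((1 + t ^ 2) / 2) * x ^ 2))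
      ((volume.restrict (Ioi 0)).prod (volume.restrict (Ioc 0 γ))) := by
  refine Integrable.mono' (g := fun p : ℝ × ℝ => p.1 * exp (-(1 / 2) * p.1 ^ 2) * 1)
    ((integrable_mul_exp_neg_mul_sq one_half_pos).integrableOn.mul_prod (integrable_const 1))
    (by apply Continuous.aestronglyMeasurable; fun_prop) ?_
  rw [Measure.prod_restrict]
  filter_upwards [ae_restrict_mem (measurableSet_Ioi.prod measurableSet_Ioc)] with p hp
  have hx : 0 < p.1 := hp.1
  rw [Function.uncurry_apply_pair, norm_of_nonneg (by positivity), mul_one]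
  gcongr
  nlinarith [sq_nonneg p.2, sq_nonneg p.1]

theorem integral_Ioi_gaussPrimitive_mul_mul_exp {γ : ℝ} (hγ : 0 ≤ γ) :
    ∫ x in Ioi (0:ℝ), gaussPrimitive (γ * x) * exp (-x ^ 2 / 2) = arctan γ := by
  simp_rw [gaussPrimitive_mul_mul_exp_eq_integral, intervalIntegral.integral_of_le hγ]
  rw [integral_integral_swap (integrable_mul_exp_neg_one_add_sq_mul_sq γ),
    setIntegral_congr_fun measurableSet_Ioc fun (t : ℝ) _ =>
      integral_Ioi_mul_exp_neg_mul_sq (by positivity : 0 < (1 + t ^ 2) / 2),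
    ← intervalIntegral.integral_of_le hγ]
  simp [mul_div_cancel₀, integral_inv_one_add_sq]

theorem integrableOn_gaussPrimitive_mul_mul_exp {γ : ℝ} (hγ : 0 ≤ γ) :
    IntegrableOn (fun x => gaussPrimitive (γ * x) * exp (-x ^ 2 / 2)) (Ioi 0) := by
  simpa only [gaussPrimitive_mul_mul_exp_eq_integral, intervalIntegral.integral_of_le hγ,
    Function.uncurry_apply_pair, IntegrableOn]
    using (integrable_mul_exp_neg_one_add_sq_mul_sq γ).integral_prod_left

theorem integral_Ioi_sub_gaussPrimitive_mul_exp {γ : ℝ} (hγ : 0 ≤ γ) :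
    ∫ x in Ioi (0:ℝ), (γ * x - gaussPrimitive (γ * x)) * exp (-x ^ 2 / 2) = γ - arctan γ := by
  have hexp : ∀ x : ℝ, exp (-x ^ 2 / 2) = exp (-(1 / 2) * x ^ 2) := fun x => by ring_nf
  have hmoment : IntegrableOn (fun x : ℝ => x * exp (-x ^ 2 / 2)) (Ioi 0) := by
    simpa only [hexp] using (integrable_mul_exp_neg_mul_sq one_half_pos).integrableOn
  simp_rw [sub_mul, mul_assoc]
  rw [integral_sub (hmoment.const_mul γ) (integrableOn_gaussPrimitive_mul_mul_exp hγ),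
    integral_const_mul, integral_Ioi_gaussPrimitive_mul_mul_exp hγ]
  simp only [hexp, integral_Ioi_mul_exp_neg_mul_sq one_half_pos]
  norm_num

theorem max_mul_max_sub_eq_zero {c : ℝ} (hc : c ≤ 0) (z : ℝ) : max z 0 * max (c - z) 0 = 0 := by
  rcases le_or_gt z 0 with hz | hz
  · rw [max_eq_right hz, zero_mul]
  · rw [max_eq_right (by linarith : c - z ≤ 0), mul_zero]

theorem integral_integral_max_mul_max_mul_exp {γ : ℝ} (hγ : 0 ≤ γ) :
    ∫ x, ∫ z, max z 0 * max (γ * x - z) 0 * exp (-z ^ 2 / 2) * exp (-x ^ 2 / 2)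
      = γ - arctan γ := by
  have hinner : ∀ x : ℝ, ∫ z, max z 0 * max (γ * x - z) 0 * exp (-z ^ 2 / 2) * exp (-x ^ 2 / 2)
      = (Ioi 0).indicator (fun x => (γ * x - gaussPrimitive (γ * x)) * exp (-x ^ 2 / 2)) x := by
    intro x
    rw [integral_mul_const]
    rcases le_or_gt x 0 with hx | hx
    · rw [indicator_of_notMem (show x ∉ Ioi 0 from not_lt.2 hx)]
      simp [max_mul_max_sub_eq_zero (mul_nonpos_of_nonneg_of_nonpos hγ hx)]
    · rw [indicator_of_mem (show x ∈ Ioi 0 from hx),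
        integral_max_mul_max_sub_mul_exp (by positivity)]
  simp_rw [hinner]
  rw [integral_indicator measurableSet_Ioi, integral_Ioi_sub_gaussPrimitive_mul_exp hγ]

theorem integral_integral_max_mul_max_gaussian {a b : ℝ} (ha : 0 < a) (hb : 0 < b) :
    ∫ x : ℝ, ∫ z : ℝ, max z 0 * max (x / a - z / b) 0 *
        (exp (-z ^ 2 / 2) / √(2 * π)) * (exp (-x ^ 2 / 2) / √(2 * π))
      = (b / a - arctan (b / a)) / (2 * π * b) := by
  have hrescale : ∀ x z : ℝ, max z 0 * max (x / a - z / b) 0 *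
        (exp (-z ^ 2 / 2) / √(2 * π)) * (exp (-x ^ 2 / 2) / √(2 * π))
      = (2 * π * b)⁻¹ *
          (max z 0 * max (b / a * x - z) 0 * exp (-z ^ 2 / 2) * exp (-x ^ 2 / 2)) := by
    intro x z
    have hmax : max (x / a - z / b) 0 = b⁻¹ * max (b / a * x - z) 0 := by
      rw [mul_max_of_nonneg _ _ (inv_nonneg.2 hb.le), mul_zero]
      congr 1
      field_simp
    rw [hmax]
    field_simp
    rw [sq_sqrt (by positivity)]
    ring
  simp_rw [hrescale, integral_const_mul]
  rw [integral_integral_max_mul_max_mul_exp (div_pos hb ha).le]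
  field_simp

theorem groeneboom_vertex_density_explicit
    (v₁ v₂ : ℝ) (hv₁ : 0 < v₁) (hv₁₂ : v₁ < v₂) :
    (2 / (v₂ - v₁) ^ ((3:ℝ)/2)) *
      ∫ x : ℝ, ∫ z : ℝ,
        max z 0 * max (x / Real.sqrt v₁ - z / Real.sqrt (v₂ - v₁)) 0 *
          (Real.exp (-z^2 / 2) / Real.sqrt (2 * π)) *
          (Real.exp (-x^2 / 2) / Real.sqrt (2 * π))
    = (1 / (π * (v₂ - v₁)^2)) *
        (Real.sqrt ((v₂ - v₁) / v₁) - Real.arctan (Real.sqrt ((v₂ - v₁) / v₁))) := by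
  have hd : 0 < v₂ - v₁ := sub_pos.2 hv₁₂
  have hb : 0 < √(v₂ - v₁) := sqrt_pos.2 hd
  have hsq : (v₂ - v₁) ^ 2 = √(v₂ - v₁) ^ 4 := by
    rw [show 4 = 2 * 2 from rfl, pow_mul, sq_sqrt hd.le]
  rw [integral_integral_max_mul_max_gaussian (sqrt_pos.2 hv₁) hb, sqrt_div' _ hv₁.le,
    rpow_div_two_eq_sqrt 3 hd.le, rpow_ofNat, hsq]
  field_simp
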